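/- For every p∈U_δ(p₀) and μ>0, the limit lim_{z→M(p)⁺} Ω(p;z) = Ω(p) holds, and consequently lim_{z→M(p)⁺} Δ(μ,p;z) = 1 − μ/μ(p). -/

import Mathlib

open MeasureTheory Real Filter Topology

noncomputable section

/-- The 3-torus `T³ = (ℝ/2πℤ)³` is modeled as `ℝ³ = Fin 3 → ℝ`; all functions involved
are required to be `2π`-periodic in each variable. -/
abbrev 𝕋 : Type := Fin 3 → ℝ

/-- The shift by `2π` times an integer vector (a period of the torus). -/
def shift (v : Fin 3 → ℤ) : 𝕋 := fun i => 2 * Real.pi * (v i)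

/-- A fundamental domain `(-π, π]³` of the torus, used as the integration domain. -/
def box : Set 𝕋 := Set.univ.pi fun _ => Set.Ioc (-Real.pi) Real.pi

/-!
A nondegenerate maximum `x` of `h = w p` gives `h x - h y ≥ c ‖y - x‖²` near `x` (second-order
Taylor bound plus coercivity of the negative definite Hessian), and by periodicity near every other
maximum point `x + shift v`. As `‖·‖⁻²` is locally integrable in dimension `3`, the integrand
`φ² / (h x - h)` is locally integrable, hence integrable on the bounded domain `box`. For `z > h x`
the integrand `φ² / (z - h)` is dominated by it and converges to it off the null set of maximum
points, so dominated convergence gives the first limit; the second follows by continuity.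
-/

section QuadraticGap

variable {E : Type*} [NormedAddCommGroup E] [NormedSpace ℝ E]

lemma exists_pos_mul_norm_sq_le_neg_apply [FiniteDimensional ℝ E] {H : E →L[ℝ] E →L[ℝ] ℝ}
    (hH : ∀ v ≠ 0, H v v < 0) : ∃ c > 0, ∀ v, c * ‖v‖ ^ 2 ≤ -H v v := by
  rcases subsingleton_or_nontrivial E with hE | hE
  · exact ⟨1, one_pos, fun v => by simp [Subsingleton.elim v 0]⟩
  set Q : E → ℝ := fun v => -H v v
  obtain ⟨u, hu, hmin⟩ := (isCompact_sphere (0 : E) 1).exists_isMinOn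
    (NormedSpace.sphere_nonempty.2 zero_le_one)
    (H.continuous₂.comp (continuous_id.prodMk continuous_id)).neg.continuousOn (f := Q)
  have hu1 : ‖u‖ = 1 := by simpa using hu
  refine ⟨-H u u, by linarith [hH u (norm_ne_zero_iff.mp (by simp [hu1]))], fun v => ?_⟩
  rcases eq_or_ne v 0 with rfl | hv
  · simp
  have hv' : 0 < ‖v‖ := norm_pos_iff.mpr hv
  have hmem : ‖v‖⁻¹ • v ∈ Metric.sphere (0 : E) 1 := by
    simp [norm_smul, inv_mul_cancel₀ hv'.ne']
  have hle : Q u ≤ Q (‖v‖⁻¹ • v) := hmin hmem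
  simp only [Q, map_smul, smul_apply, smul_eq_mul] at hle
  have hsq : ‖v‖ ^ 2 * (‖v‖⁻¹ * (‖v‖⁻¹ * H v v)) = H v v := by field_simp
  nlinarith [sq_nonneg ‖v‖]

lemma abs_sub_sub_half_apply_le {h : E → ℝ} (hd : Differentiable ℝ h) {H : E →L[ℝ] E →L[ℝ] ℝ}
    {x y : E} {ε : ℝ} (hε : 0 ≤ ε)
    (hH : ∀ t ∈ Set.Icc (0 : ℝ) 1, ‖fderiv ℝ h (x + t • y) - H (t • y)‖ ≤ ε * ‖t • y‖) :
    |h (x + y) - h x - H y y / 2| ≤ ε * ‖y‖ ^ 2 := by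
  set ψ : ℝ → ℝ := fun t => h (x + t • y) - t ^ 2 / 2 * H y y
  have hψ : ∀ t ∈ Set.Icc (0 : ℝ) 1,
      HasDerivWithinAt ψ ((fderiv ℝ h (x + t • y) - H (t • y)) y) (Set.Icc 0 1) t := by
    intro t _
    have hseg : HasDerivAt (fun t : ℝ => x + t • y) y t := by
      simpa using ((hasDerivAt_id t).smul_const y).const_add x
    have hq : HasDerivAt (fun t : ℝ => t ^ 2 / 2 * H y y) (t * H y y) t :=
      (((hasDerivAt_pow 2 t).div_const 2).mul_const (H y y)).congr_deriv (by norm_num)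
    have hh := (hd _).hasFDerivAt.comp_hasDerivAt t hseg
    exact ((hh.sub hq).congr_deriv (by simp)).hasDerivWithinAt
  have hbound : ∀ t ∈ Set.Ico (0 : ℝ) 1,
      ‖(fderiv ℝ h (x + t • y) - H (t • y)) y‖ ≤ ε * ‖y‖ ^ 2 := by
    intro t ht
    have hty : ‖t • y‖ ≤ ‖y‖ := by
      rw [norm_smul, Real.norm_of_nonneg ht.1]
      exact mul_le_of_le_one_left (norm_nonneg y) ht.2.le
    calc _ ≤ ‖fderiv ℝ h (x + t • y) - H (t • y)‖ * ‖y‖ := ContinuousLinearMap.le_opNorm _ y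
      _ ≤ ε * ‖t • y‖ * ‖y‖ := by gcongr; exact hH t (Set.Ico_subset_Icc_self ht)
      _ ≤ ε * ‖y‖ ^ 2 := by rw [sq, ← mul_assoc]; gcongr
  have := norm_image_sub_le_of_norm_deriv_le_segment' hψ hbound 1 (Set.right_mem_Icc.2 zero_le_one)
  have hdiff : h (x + y) - h x - H y y / 2 = ψ 1 - ψ 0 := by simp [ψ]; ring
  rw [hdiff, ← Real.norm_eq_abs]
  simpa using this

lemma exists_pos_mul_norm_sub_sq_le_sub [FiniteDimensional ℝ E] {h : E → ℝ} {x : E}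
    (hh : ContDiff ℝ 2 h) (hgrad : fderiv ℝ h x = 0)
    (hhess : ∀ v ≠ 0, iteratedFDeriv ℝ 2 h x ![v, v] < 0) :
    ∃ c > 0, ∀ᶠ y in 𝓝 x, c * ‖y - x‖ ^ 2 ≤ h x - h y := by
  set H := fderiv ℝ (fderiv ℝ h) x
  obtain ⟨c, hc, hcH⟩ := exists_pos_mul_norm_sq_le_neg_apply (H := H) fun v hv => by
    simpa [iteratedFDeriv_two_apply] using hhess v hv
  have hdiff : HasFDerivAt (fderiv ℝ h) H x :=
    ((hh.fderiv_right (m := 1) le_rfl).differentiable one_ne_zero x).hasFDerivAt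
  have hsmall := (hasFDerivAt_iff_isLittleO_nhds_zero.mp hdiff).def (by positivity : 0 < c / 4)
  rw [hgrad, Metric.eventually_nhds_iff_ball] at hsmall
  obtain ⟨r, hr, hball⟩ := hsmall
  refine ⟨c / 4, by positivity, ?_⟩
  filter_upwards [Metric.ball_mem_nhds x hr] with z hz
  have hseg : ∀ t ∈ Set.Icc (0 : ℝ) 1,
      ‖fderiv ℝ h (x + t • (z - x)) - H (t • (z - x))‖ ≤ c / 4 * ‖t • (z - x)‖ := by
    intro t ht
    have hmem : t • (z - x) ∈ Metric.ball (0 : E) r := by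
      rw [mem_ball_zero_iff, norm_smul, Real.norm_of_nonneg ht.1]
      exact lt_of_le_of_lt (mul_le_of_le_one_left (norm_nonneg _) ht.2) (mem_ball_iff_norm.mp hz)
    simpa using hball _ hmem
  have key := abs_sub_sub_half_apply_le (hh.differentiable two_ne_zero) (by positivity) hseg
  rw [add_sub_cancel] at key
  have := hcH (z - x)
  linarith [(abs_le.mp key).2]

end QuadraticGap

section LocalIntegrability

variable {E : Type*} [NormedAddCommGroup E] [NormedSpace ℝ E] [FiniteDimensional ℝ E]
  [MeasurableSpace E] [BorelSpace E] {μ : Measure E} [μ.IsAddHaarMeasure]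

lemma integrableAtFilter_nhds_of_norm_le_rpow {F : Type*} [NormedAddCommGroup F]
    (hd : 1 ≤ Module.finrank ℝ E) {f : E → F} {a : E} {C α : ℝ}
    (hα : α < Module.finrank ℝ E) (hf : AEStronglyMeasurable f μ)
    (hbound : ∀ᶠ y in 𝓝 a, ‖f y‖ ≤ C * ‖y - a‖ ^ (-α)) :
    IntegrableAtFilter f (𝓝 a) μ := by
  obtain ⟨r, hr, hball⟩ := Metric.eventually_nhds_iff_ball.mp hbound
  have htrans := measurePreserving_add_right μ a
  refine ⟨Metric.ball a r, Metric.ball_mem_nhds a hr, ?_⟩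
  rw [← htrans.integrableOn_comp_preimage (measurableEmbedding_addRight a),
    Metric.preimage_add_right_ball, sub_self]
  refine integrableOn_ball_of_norm_le_rpow (C := C) hd hα ?_ (hf.comp_measurePreserving htrans)
  refine ae_restrict_of_forall_mem Metric.isOpen_ball.measurableSet fun y hy => ?_
  simpa using hball (y + a) (by simpa using hy)

lemma locallyIntegrable_div_sub_of_quadratic_gap (hdim : 2 < Module.finrank ℝ E)
    {g h : E → ℝ} {m : ℝ} (hg : Continuous g) (hh : Continuous h)
    (hgap : ∀ s, h s = m → ∃ c > 0, ∀ᶠ y in 𝓝 s, c * ‖y - s‖ ^ 2 ≤ m - h y) :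
    LocallyIntegrable (fun s => g s / (m - h s)) μ := by
  have hmeas : AEStronglyMeasurable (fun s => g s / (m - h s)) μ :=
    (hg.measurable.div (measurable_const.sub hh.measurable)).aestronglyMeasurable
  intro s
  by_cases hs : h s = m
  · obtain ⟨c, hc, hcs⟩ := hgap s hs
    have hgs : ∀ᶠ y in 𝓝 s, ‖g y‖ < ‖g s‖ + 1 :=
      hg.norm.continuousAt.eventually_lt continuousAt_const (lt_add_one _)
    refine integrableAtFilter_nhds_of_norm_le_rpow (by omega) (α := 2)
      (C := (‖g s‖ + 1) / c) (by exact_mod_cast hdim) hmeas ?_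
    filter_upwards [hcs, hgs] with y hy hgy
    rcases eq_or_ne y s with rfl | hne
    · simp [hs] -- at `s` itself the quotient is `g s / 0 = 0`
    have hys : 0 < ‖y - s‖ := norm_pos_iff.mpr (sub_ne_zero.mpr hne)
    have hgap_pos : 0 < c * ‖y - s‖ ^ 2 := by positivity
    rw [norm_div, Real.norm_of_nonneg (hgap_pos.le.trans hy), Real.rpow_neg hys.le,
      Real.rpow_two]
    calc ‖g y‖ / (m - h y) ≤ (‖g s‖ + 1) / (c * ‖y - s‖ ^ 2) :=
          div_le_div₀ (by positivity) hgy.le hgap_pos hy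
      _ = (‖g s‖ + 1) / c * (‖y - s‖ ^ 2)⁻¹ := by field_simp
  · have hcont : ContinuousAt (fun s => g s / (m - h s)) s :=
      hg.continuousAt.div (continuousAt_const.sub hh.continuousAt) (sub_ne_zero.mpr (Ne.symm hs))
    exact hcont.integrableAtFilter hmeas.stronglyMeasurableAtFilter (μ.finiteAt_nhds s)

end LocalIntegrability

lemma tendsto_integral_div_sub_nhdsGT {α : Type*} [MeasurableSpace α] {μ : Measure α}
    {g h : α → ℝ} {m : ℝ} (hg : AEMeasurable g μ) (hh : AEMeasurable h μ)
    (hlt : ∀ᵐ s ∂μ, h s < m) (hint : Integrable (fun s => g s / (m - h s)) μ) :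
    Tendsto (fun z => ∫ s, g s / (z - h s) ∂μ) (𝓝[>] m) (𝓝 (∫ s, g s / (m - h s) ∂μ)) := by
  refine tendsto_integral_filter_of_dominated_convergence (fun s => ‖g s / (m - h s)‖)
    (Eventually.of_forall fun z => (hg.div (aemeasurable_const.sub hh)).aestronglyMeasurable)
    ?_ hint.norm ?_
  · filter_upwards [self_mem_nhdsWithin] with z (hz : m < z)
    filter_upwards [hlt] with s hs
    rw [norm_div, norm_div, Real.norm_of_nonneg (sub_nonneg.2 (hs.trans hz).le),
      Real.norm_of_nonneg (sub_nonneg.2 hs.le)]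
    gcongr
  · filter_upwards [hlt] with s hs
    have hcont : ContinuousAt (fun z => g s / (z - h s)) m :=
      continuousAt_const.div (continuousAt_id.sub continuousAt_const) (sub_ne_zero.2 hs.ne')
    exact hcont.tendsto.mono_left nhdsWithin_le_nhds

lemma shift_zero : shift 0 = 0 := by
  ext i
  simp [shift]

lemma volume_setOf_eq_eq_zero {h : 𝕋 → ℝ} {x : 𝕋}
    (huniq : ∀ q, h q = h x → ∃ v : Fin 3 → ℤ, q = x + shift v) :
    volume {s | h s = h x} = 0 := by
  refine Set.Countable.measure_zero ((Set.countable_range fun v => x + shift v).mono ?_) _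
  intro s hs
  obtain ⟨v, rfl⟩ := huniq s hs
  exact ⟨v, rfl⟩

lemma exists_pos_mul_norm_sub_sq_le_sub_of_eq {h : 𝕋 → ℝ} {x : 𝕋} (hh : ContDiff ℝ 2 h)
    (hper : ∀ q (v : Fin 3 → ℤ), h (q + shift v) = h q)
    (huniq : ∀ q, h q = h x → ∃ v : Fin 3 → ℤ, q = x + shift v)
    (hgrad : fderiv ℝ h x = 0) (hhess : ∀ v ≠ 0, iteratedFDeriv ℝ 2 h x ![v, v] < 0)
    (s : 𝕋) (hs : h s = h x) : ∃ c > 0, ∀ᶠ y in 𝓝 s, c * ‖y - s‖ ^ 2 ≤ h x - h y := by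
  obtain ⟨v, rfl⟩ := huniq s hs
  obtain ⟨c, hc, hgap⟩ := exists_pos_mul_norm_sub_sq_le_sub hh hgrad hhess
  have htend : Tendsto (· - shift v) (𝓝 (x + shift v)) (𝓝 x) := by
    simpa using (continuous_sub_right (shift v)).tendsto (x + shift v)
  refine ⟨c, hc, (htend.eventually hgap).mono fun y hy => ?_⟩
  have hyv : h (y - shift v) = h y := by simpa using (hper (y - shift v) v).symm
  rwa [hyv, sub_sub, add_comm (shift v)] at hy

lemma integrableOn_box_div_sub {g h : 𝕋 → ℝ} {x : 𝕋} (hg : Continuous g) (hh : ContDiff ℝ 2 h)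
    (hper : ∀ q (v : Fin 3 → ℤ), h (q + shift v) = h q)
    (huniq : ∀ q, h q = h x → ∃ v : Fin 3 → ℤ, q = x + shift v)
    (hgrad : fderiv ℝ h x = 0) (hhess : ∀ v ≠ 0, iteratedFDeriv ℝ 2 h x ![v, v] < 0) :
    IntegrableOn (fun s => g s / (h x - h s)) box := by
  have hloc : LocallyIntegrable (fun s => g s / (h x - h s)) :=
    locallyIntegrable_div_sub_of_quadratic_gap (by simp) hg hh.continuous
      (exists_pos_mul_norm_sub_sq_le_sub_of_eq hh hper huniq hgrad hhess)
  exact (hloc.integrableOn_isCompact (isCompact_univ_pi fun _ => isCompact_Icc)).mono_set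
    (Set.pi_mono fun _ _ => Set.Ioc_subset_Icc_self)

theorem statement11
    (φ : 𝕋 → ℝ)
    (hφa : AnalyticOnNhd ℝ φ Set.univ)
    (w : 𝕋 → 𝕋 → ℝ)
    (hwa : AnalyticOnNhd ℝ (fun x : 𝕋 × 𝕋 => w x.1 x.2) Set.univ)
    (hwper : ∀ (p q : 𝕋) (v u : Fin 3 → ℤ), w (p + shift v) (q + shift u) = w p q)
    (p₀ : 𝕋)
    (δ : ℝ) (q0 : 𝕋 → 𝕋)
    (hq0max : ∀ p ∈ Metric.ball p₀ δ, ∀ q : 𝕋, w p q ≤ w p (q0 p))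
    (hq0uniq : ∀ p ∈ Metric.ball p₀ δ, ∀ q : 𝕋, w p q = w p (q0 p) →
      ∃ v : Fin 3 → ℤ, q = q0 p + shift v)
    (hq0grad : ∀ p ∈ Metric.ball p₀ δ, fderiv ℝ (w p) (q0 p) = 0)
    (hq0hess : ∀ p ∈ Metric.ball p₀ δ, ∀ v : 𝕋, v ≠ 0 →
      iteratedFDeriv ℝ 2 (w p) (q0 p) ![v, v] < 0)
    (p : 𝕋) (hp : p ∈ Metric.ball p₀ δ) (μ : ℝ) :
    Tendsto (fun z : ℝ => ∫ s in box, φ s ^ 2 / (z - w p s)) (𝓝[>] (w p (q0 p)))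
      (𝓝 (∫ s in box, φ s ^ 2 / (w p (q0 p) - w p s))) ∧
    Tendsto (fun z : ℝ => 1 - μ * ∫ s in box, φ s ^ 2 / (z - w p s)) (𝓝[>] (w p (q0 p)))
      (𝓝 (1 - μ / (∫ s in box, φ s ^ 2 / (w p (q0 p) - w p s))⁻¹)) := by
  have hper : ∀ q (v : Fin 3 → ℤ), w p (q + shift v) = w p q := fun q v => by
    simpa [shift_zero] using hwper p q 0 v
  have hcd : ContDiff ℝ 2 (w p) := hwa.contDiff.comp (contDiff_const.prodMk contDiff_id)
  have hφ : Continuous fun s => φ s ^ 2 := hφa.continuous.pow 2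
  have hint := integrableOn_box_div_sub hφ hcd hper (hq0uniq p hp) (hq0grad p hp) (hq0hess p hp)
  have hlt : ∀ᵐ s ∂volume.restrict box, w p s < w p (q0 p) := by
    refine ae_restrict_of_ae ?_
    filter_upwards [measure_eq_zero_iff_ae_notMem.mp (volume_setOf_eq_eq_zero (hq0uniq p hp))]
      with s hs
    exact (hq0max p hp s).lt_of_ne hs
  have hlim := tendsto_integral_div_sub_nhdsGT hφ.measurable.aemeasurable
    hcd.continuous.measurable.aemeasurable hlt hint
  refine ⟨hlim, ?_⟩
  simpa only [div_inv_eq_mul] using (hlim.const_mul μ).const_sub 1
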